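/- arXiv:1411.1467 — 5 statements merged into one kernel-verified Lean document; each statement's English description precedes it below -/
import Mathlib

section
/- If X is a Binomial(n,p) random variable with p < 1/n, then E|X/n - p| = 2p(1-p)^n. -/
/-!
The Bernstein weights `b_k(p) = C(n,k) p^k (1-p)^(n-k)` sum to `1` and have mean `n p`, so the
signed deviations `b_k(p) (k/n - p)` sum to zero. When `p < 1/n` only the `k = 0` deviation is
negative, hence the absolute deviations sum to twice its size, `2 p (1-p)^n`.
-/

open Finset Polynomial

theorem bernsteinPolynomial.sum_eval_mul_div_sub {R : Type*} [Field R] {n : ℕ} (hn : (n : R) ≠ 0)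
    (p : R) :
    ∑ k ∈ range (n + 1), (bernsteinPolynomial R n k).eval p * (k / n - p) = 0 := by
  have htotal := congrArg (eval p) (bernsteinPolynomial.sum R n)
  have hmean := congrArg (eval p) (bernsteinPolynomial.sum_smul R n)
  simp only [eval_finsetSum, nsmul_eq_mul, eval_mul, eval_natCast, eval_one, eval_X]
    at htotal hmean
  calc ∑ k ∈ range (n + 1), (bernsteinPolynomial R n k).eval p * (k / n - p)
      = (∑ k ∈ range (n + 1), (k : R) * (bernsteinPolynomial R n k).eval p) / n
          - p * ∑ k ∈ range (n + 1), (bernsteinPolynomial R n k).eval p := by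
        rw [sum_div, mul_sum, ← sum_sub_distrib]
        exact sum_congr rfl fun k _ => by ring
    _ = 0 := by rw [hmean, htotal]; field_simp; ring

theorem sum_mul_abs_eq_of_sum_mul_eq_zero {w x : ℕ → ℝ} {n : ℕ}
    (hsum : ∑ k ∈ range (n + 1), w k * x k = 0) (hx0 : x 0 ≤ 0)
    (hx : ∀ k ∈ range n, 0 ≤ x (k + 1)) :
    ∑ k ∈ range (n + 1), w k * |x k| = -2 * (w 0 * x 0) := by
  rw [sum_range_succ'] at hsum ⊢
  rw [sum_congr rfl fun k hk => by rw [abs_of_nonneg (hx k hk)], abs_of_nonpos hx0]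
  linarith

/-- De Moivre's identity: for `X ~ B(n,p)` with `p < 1/n`,
the Binomial mean absolute deviation satisfies `E|X/n - p| = 2p(1-p)^n`. -/
theorem binomial_mad_identity (n : ℕ) (p : ℝ) (hp0 : 0 ≤ p) (hp : p < 1 / n) :
    ∑ k ∈ Finset.range (n + 1),
      (n.choose k : ℝ) * p ^ k * (1 - p) ^ (n - k) * |(k : ℝ) / n - p|
      = 2 * p * (1 - p) ^ n := by
  have hn : (n : ℝ) ≠ 0 := by
    rintro hn
    rw [hn, div_zero] at hp
    linarith
  have hweight (k : ℕ) :
      (n.choose k : ℝ) * p ^ k * (1 - p) ^ (n - k) = (bernsteinPolynomial ℝ n k).eval p := by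
    simp [bernsteinPolynomial]
  simp only [hweight]
  rw [sum_mul_abs_eq_of_sum_mul_eq_zero (bernsteinPolynomial.sum_eval_mul_div_sub hn p)
    (by simpa using hp0)]
  · rw [← hweight, Nat.choose_zero_right, Nat.sub_zero, Nat.cast_zero, zero_div]
    ring
  · intro k _
    have : (1 : ℝ) / n ≤ (k + 1 : ℕ) / n := by gcongr; simp
    linarith
end

section
/- If X ~ Binomial(n, p) with p ≥ 2e²Δ_n, where Δ_n = (ln n)^{2η}/n and η > 1, and g_n(X) = (X/n)·1{X/n > e²Δ_n}, then E|g_n(X) - p| ≤ √(p/n) + n^{-e²/4}. -/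
/-!
Split the error of the thresholded estimator according to whether `X/n` clears the threshold
`t = e²Δ_n`. Since `t ≤ p/2`, on the event `X/n ≤ t` the error `p` equals `(p - X/n) + X/n`, so
`E|g_n(X) - p| = E|X/n - p| + E[X/n; X/n ≤ t]`. The first term is at most `√(p(1-p)/n)` by
Cauchy–Schwarz. The second is at most `t · P(X ≤ np/2) ≤ e^{-np/8}` by the Chernoff bound with
`δ = 1/2`, and `np ≥ 2e² ln n` turns this into `n^{-e²/4}` (for `n = 2` the second term vanishes).
-/

open Finset Real

noncomputable def binomialWeight (n : ℕ) (p : ℝ) (k : ℕ) : ℝ :=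
  n.choose k * p ^ k * (1 - p) ^ (n - k)

section binomialWeight

variable {n : ℕ} {p : ℝ}

lemma binomialWeight_nonneg (hp0 : 0 ≤ p) (hp1 : p ≤ 1) (k : ℕ) : 0 ≤ binomialWeight n p k := by
  have : 0 ≤ 1 - p := by linarith
  unfold binomialWeight
  positivity

lemma sum_binomialWeight_mul_pow (n : ℕ) (p r : ℝ) :
    ∑ k ∈ range (n + 1), binomialWeight n p k * r ^ k = (1 - p + p * r) ^ n := by
  rw [show 1 - p + p * r = p * r + (1 - p) by ring, add_pow]
  refine sum_congr rfl fun k _ => ?_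
  simp only [binomialWeight, mul_pow]
  ring

lemma sum_binomialWeight (n : ℕ) (p : ℝ) : ∑ k ∈ range (n + 1), binomialWeight n p k = 1 := by
  simpa using sum_binomialWeight_mul_pow n p 1

lemma sum_sq_sub_mul_binomialWeight (hn : n ≠ 0) (hp0 : 0 ≤ p) (hp1 : p ≤ 1) :
    ∑ k ∈ range (n + 1), (p - k / n) ^ 2 * binomialWeight n p k = p * (1 - p) / n := by
  rw [sum_range]
  simpa [binomialWeight, bernstein_apply, bernstein.z] using bernstein.variance hn ⟨p, hp0, hp1⟩

lemma sum_binomialWeight_mul_abs_sub_le (hn : n ≠ 0) (hp0 : 0 ≤ p) (hp1 : p ≤ 1) :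
    ∑ k ∈ range (n + 1), binomialWeight n p k * |k / n - p| ≤ √(p * (1 - p) / n) := by
  rw [← sum_sq_sub_mul_binomialWeight hn hp0 hp1]
  refine le_sqrt_of_sq_le ?_
  have := sum_sq_le_sum_mul_sum_of_sq_le_mul (range (n + 1))
    (r := fun k => binomialWeight n p k * |k / n - p|)
    (fun k _ => binomialWeight_nonneg hp0 hp1 k)
    (fun k _ => mul_nonneg (sq_nonneg (p - k / n)) (binomialWeight_nonneg hp0 hp1 k))
    (fun k _ => le_of_eq (by rw [mul_pow, sq_abs]; ring))
  rwa [sum_binomialWeight, one_mul] at this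

lemma sum_filter_binomialWeight_le {r : ℝ} (hp0 : 0 ≤ p) (hp1 : p ≤ 1) (hr0 : 0 < r) (hr1 : r ≤ 1)
    (a : ℝ) :
    ∑ k ∈ range (n + 1) with ((k : ℕ) : ℝ) ≤ a, binomialWeight n p k ≤
      (1 - p + p * r) ^ n / r ^ a := by
  rw [← sum_binomialWeight_mul_pow, le_div_iff₀ (rpow_pos_of_pos hr0 a), sum_mul]
  calc ∑ k ∈ range (n + 1) with ((k : ℕ) : ℝ) ≤ a, binomialWeight n p k * r ^ a
      ≤ ∑ k ∈ range (n + 1) with ((k : ℕ) : ℝ) ≤ a, binomialWeight n p k * r ^ k := by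
        refine sum_le_sum fun k hk => ?_
        rw [← rpow_natCast]
        exact mul_le_mul_of_nonneg_left (rpow_le_rpow_of_exponent_ge hr0 hr1 (mem_filter.1 hk).2)
          (binomialWeight_nonneg hp0 hp1 k)
    _ ≤ ∑ k ∈ range (n + 1), binomialWeight n p k * r ^ k :=
        sum_le_sum_of_subset_of_nonneg (filter_subset _ _)
          fun k _ _ => mul_nonneg (binomialWeight_nonneg hp0 hp1 k) (by positivity)

-- Chernoff's lower-tail bound with `δ = 1/2`: take `r = 1/2` and use `1 - log 2 ≥ 1/4`.
lemma sum_filter_binomialWeight_le_exp (hp0 : 0 ≤ p) (hp1 : p ≤ 1) :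
    ∑ k ∈ range (n + 1) with ((k : ℕ) : ℝ) ≤ n * p / 2, binomialWeight n p k ≤
      exp (-(n * p) / 8) := by
  have hnp : 0 ≤ (n : ℝ) * p := by positivity
  calc ∑ k ∈ range (n + 1) with ((k : ℕ) : ℝ) ≤ n * p / 2, binomialWeight n p k
      ≤ (1 - p + p * (1 / 2)) ^ n / (1 / 2) ^ (n * p / 2) :=
        sum_filter_binomialWeight_le hp0 hp1 (by norm_num) (by norm_num) _
    _ ≤ exp (-p / 2) ^ n * exp (log 2 * (n * p / 2)) := by
        rw [div_eq_mul_inv, ← rpow_neg (by norm_num), one_div, inv_rpow (by norm_num),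
          rpow_neg (by norm_num), inv_inv, rpow_def_of_pos (by norm_num)]
        gcongr
        linarith [add_one_le_exp (-p / 2)]
    _ = exp (-(n * p) * (1 - log 2) / 2) := by rw [← exp_nat_mul, ← exp_add]; ring_nf
    _ ≤ exp (-(n * p) / 8) := exp_le_exp.2 (by nlinarith [log_two_lt_d9])

end binomialWeight

noncomputable def lowerPartialMean (n : ℕ) (p t : ℝ) : ℝ :=
  ∑ k ∈ range (n + 1), binomialWeight n p k * if (k : ℝ) / n > t then 0 else (k : ℝ) / n

lemma lowerPartialMean_le {n : ℕ} {p t : ℝ} (hn : n ≠ 0) (ht0 : 0 ≤ t) (htp : 2 * t ≤ p)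
    (hp1 : p ≤ 1) : lowerPartialMean n p t ≤ t * exp (-(n * p) / 8) := by
  have hp0 : 0 ≤ p := by linarith
  have hn0 : (0 : ℝ) < n := by positivity
  calc lowerPartialMean n p t
      ≤ t * ∑ k ∈ range (n + 1) with ((k : ℕ) : ℝ) ≤ n * p / 2, binomialWeight n p k := by
        rw [sum_filter, mul_sum]
        refine sum_le_sum fun k _ => ?_
        have hW := binomialWeight_nonneg (n := n) hp0 hp1 k
        split_ifs with hkt hk hk
        · simpa using mul_nonneg ht0 hW
        · simp
        · rw [mul_comm t]
          exact mul_le_mul_of_nonneg_left (not_lt.1 hkt) hW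
        · rw [not_lt, div_le_iff₀ hn0] at hkt
          exact absurd (by nlinarith) hk
    _ ≤ t * exp (-(n * p) / 8) :=
        mul_le_mul_of_nonneg_left (sum_filter_binomialWeight_le_exp hp0 hp1) ht0

lemma lowerPartialMean_le_rpow {n : ℕ} {p t : ℝ} (hn : n ≠ 0) (ht0 : 0 ≤ t) (htp : 2 * t ≤ p)
    (hp1 : p ≤ 1) (hnp : 2 * exp 2 * log n ≤ n * p) :
    lowerPartialMean n p t ≤ n ^ (-exp 2 / 4) := by
  have hn0 : (0 : ℝ) < n := by positivity
  calc lowerPartialMean n p t ≤ 1 * exp (-(n * p) / 8) :=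
        (lowerPartialMean_le hn ht0 htp hp1).trans (by gcongr; linarith)
    _ ≤ exp (log n * (-exp 2 / 4)) := by
        rw [one_mul]
        gcongr
        linarith
    _ = n ^ (-exp 2 / 4) := (rpow_def_of_pos hn0 _).symm

lemma lowerPartialMean_two_eq_zero {p t : ℝ} (htp : 2 * t ≤ p) (hp1 : p ≤ 1) :
    lowerPartialMean 2 p t = 0 := by
  have h2 : t < 1 := by linarith
  rcases hp1.lt_or_eq with hp1 | rfl
  · have h1 : t < 2⁻¹ := by linarith
    simp [lowerPartialMean, sum_range_succ, h1, h2]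
  · simp [lowerPartialMean, binomialWeight, sum_range_succ, h2]

lemma abs_hardThreshold_sub {x t p : ℝ} (hx : 0 ≤ x) (htp : t ≤ p) :
    |(if x > t then x else 0) - p| = |x - p| + if x > t then 0 else x := by
  split_ifs with h
  · simp
  · rw [zero_sub, abs_neg, abs_of_nonneg (by linarith), abs_of_nonpos (by linarith)]
    ring

lemma sum_binomialWeight_mul_abs_hardThreshold_sub {n : ℕ} {p t : ℝ} (htp : t ≤ p) :
    ∑ k ∈ range (n + 1), binomialWeight n p k * |(if (k : ℝ) / n > t then (k : ℝ) / n else 0) - p|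
      = ∑ k ∈ range (n + 1), binomialWeight n p k * |k / n - p| + lowerPartialMean n p t := by
  rw [lowerPartialMean, ← sum_add_distrib]
  refine sum_congr rfl fun k _ => ?_
  rw [abs_hardThreshold_sub (by positivity) htp, mul_add]

/-- For `X ~ B(n,p)` with `p ≥ 2e²Δ_n`, `Δ_n = (ln n)^{2η}/n`, the hard-thresholding
estimator `g_n(X) = (X/n)·1{X/n > e²Δ_n}` satisfies
`E|g_n(X) - p| ≤ √(p/n) + n^{-e²/4}`. -/
theorem hard_threshold_risk_large_p (n : ℕ) (η p : ℝ) (hn : 2 ≤ n) (hη : 1 < η)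
    (hp1 : p ≤ 1) (hpΔ : 2 * Real.exp 2 * (Real.log n ^ (2 * η) / n) ≤ p) :
    ∑ k ∈ Finset.range (n + 1), (n.choose k : ℝ) * p ^ k * (1 - p) ^ (n - k) *
        |(if (k : ℝ) / n > Real.exp 2 * (Real.log n ^ (2 * η) / n) then (k : ℝ) / n else 0) - p|
      ≤ Real.sqrt (p / n) + (n : ℝ) ^ (-(Real.exp 2) / 4) := by
  have hn0 : (0 : ℝ) < n := by positivity
  set t := exp 2 * (log n ^ (2 * η) / n)
  have ht0 : 0 ≤ t := by positivity
  have htp : 2 * t ≤ p := by linarith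
  have hp0 : 0 ≤ p := by linarith
  refine (sum_binomialWeight_mul_abs_hardThreshold_sub (by linarith)).le.trans (add_le_add ?_ ?_)
  · refine (sum_binomialWeight_mul_abs_sub_le (by omega) hp0 hp1).trans (sqrt_le_sqrt ?_)
    gcongr
    exact mul_le_of_le_one_right hp0 (by linarith)
  rcases hn.eq_or_lt with rfl | hn3
  · rw [lowerPartialMean_two_eq_zero htp hp1]
    positivity
  have hlog : 1 ≤ log n := by
    rw [le_log_iff_exp_le hn0]
    have : (3 : ℝ) ≤ n := by exact_mod_cast hn3
    linarith [exp_one_lt_d9]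
  refine lowerPartialMean_le_rpow (by omega) ht0 htp hp1 ?_
  calc 2 * exp 2 * log n ≤ 2 * exp 2 * log n ^ (2 * η) := by
        gcongr
        exact self_le_rpow_of_one_le hlog (by linarith)
    _ ≤ n * p := by rwa [← mul_div_assoc, div_le_iff₀ hn0, mul_comm p] at hpΔ
end

section
/- The total variation distance between Poisson distributions satisfies d_TV(Poi(t), Poi(t+x)) ≤ min{1 - e^{-x}, √(2/e)·(√(t+x) - √t)} for all t, x ≥ 0. -/
/-!
Write `p_λ(k) = e^{-λ} λ^k / k!`. Since `p_{t+x}(k) = e^{k log(1 + x/t) - x} p_t(k)`, the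
difference `p_t - p_{t+x}` is nonnegative up to some `m` and nonpositive beyond it, so
`Poi(t)(A) - Poi(t+x)(A)` is at most its value on `{0, …, m}`. Since
`d/dλ P(Poi(λ) ≤ m) = -p_λ(m)`, that value is `∫_t^{t+x} p_λ(m) dλ`, and the Stirling-type
estimate `m! ≥ √2 e^{-m} (m + 1/2)^{m + 1/2}` gives `p_λ(m) ≤ (2eλ)^{-1/2}`, whose integral is
`√(2/e) (√(t+x) - √t)`. The bound `1 - e^{-x}` comes from `p_{t+x} ≥ e^{-x} p_t`, and the other
sign of the difference from passing to complements.
-/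

/-- The probability that `Poi(λ)` lands in the set `A ⊆ ℕ`. -/
noncomputable def poiProb (lam : ℝ) (A : Set ℕ) : ℝ :=
  ∑' k : ℕ, A.indicator (fun k => Real.exp (-lam) * lam ^ k / k.factorial) k

open Real Finset

noncomputable def poissonWeight (l : ℝ) (k : ℕ) : ℝ := exp (-l) * l ^ k / k.factorial

lemma hasSum_poissonWeight (l : ℝ) : HasSum (poissonWeight l) 1 := by
  have h := (NormedSpace.expSeries_div_hasSum_exp l).mul_left (exp (-l))
  rw [← exp_eq_exp_ℝ, ← exp_add, neg_add_cancel, exp_zero] at h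
  simp_rw [← mul_div_assoc] at h
  exact h

lemma poissonWeight_nonneg {l : ℝ} (hl : 0 ≤ l) (k : ℕ) : 0 ≤ poissonWeight l k := by
  unfold poissonWeight; positivity

lemma continuous_poissonWeight (k : ℕ) : Continuous fun l => poissonWeight l k := by
  unfold poissonWeight; fun_prop

lemma poiProb_eq_tsum (l : ℝ) (A : Set ℕ) :
    poiProb l A = ∑' k, A.indicator (poissonWeight l) k := rfl

lemma poiProb_le_one {l : ℝ} (hl : 0 ≤ l) (A : Set ℕ) : poiProb l A ≤ 1 := by
  have h := hasSum_poissonWeight l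
  rw [poiProb_eq_tsum, ← h.tsum_eq]
  exact (h.summable.indicator A).tsum_le_tsum
    (Set.indicator_le_self' fun k _ => poissonWeight_nonneg hl k) h.summable

lemma poiProb_add_poiProb_compl (l : ℝ) (A : Set ℕ) : poiProb l A + poiProb l Aᶜ = 1 := by
  have h := hasSum_poissonWeight l
  rw [poiProb_eq_tsum, poiProb_eq_tsum,
    ← (h.summable.indicator A).tsum_add (h.summable.indicator Aᶜ)]
  simp_rw [Set.indicator_self_add_compl_apply]
  exact h.tsum_eq

lemma exp_neg_mul_poissonWeight_le {t x : ℝ} (ht : 0 ≤ t) (hx : 0 ≤ x) (k : ℕ) :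
    exp (-x) * poissonWeight t k ≤ poissonWeight (t + x) k := by
  unfold poissonWeight
  calc exp (-x) * (exp (-t) * t ^ k / k.factorial)
      = exp (-(t + x)) * t ^ k / k.factorial := by rw [neg_add, exp_add]; ring
    _ ≤ exp (-(t + x)) * (t + x) ^ k / k.factorial := by gcongr; linarith

lemma poiProb_sub_poiProb_add_le_one_sub_exp {t x : ℝ} (ht : 0 ≤ t) (hx : 0 ≤ x) (A : Set ℕ) :
    poiProb t A - poiProb (t + x) A ≤ 1 - exp (-x) := by
  have hle : exp (-x) * poiProb t A ≤ poiProb (t + x) A := by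
    rw [poiProb_eq_tsum, poiProb_eq_tsum, ← tsum_mul_left]
    refine Summable.tsum_le_tsum (fun k => ?_)
      (((hasSum_poissonWeight t).summable.indicator A).mul_left _)
      ((hasSum_poissonWeight _).summable.indicator A)
    by_cases hk : k ∈ A <;> simp [hk, exp_neg_mul_poissonWeight_le ht hx]
  have hP := poiProb_le_one ht A
  have hexp : exp (-x) ≤ 1 := exp_le_one_iff.2 (by linarith)
  nlinarith

lemma poissonWeight_add {t x : ℝ} (ht : 0 < t) (hx : 0 ≤ x) (k : ℕ) :
    poissonWeight (t + x) k = exp (k * log ((t + x) / t) - x) * poissonWeight t k := by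
  rw [exp_sub, exp_nat_mul, exp_log (by positivity)]
  unfold poissonWeight
  rw [neg_add, exp_add, div_pow]
  field_simp
  rw [← exp_add, neg_add_cancel, exp_zero]

lemma exists_poissonWeight_crossing {t x : ℝ} (ht : 0 ≤ t) (hx : 0 ≤ x) :
    ∃ m : ℕ, (∀ k ≤ m, poissonWeight (t + x) k ≤ poissonWeight t k) ∧
      ∀ k, m < k → poissonWeight t k ≤ poissonWeight (t + x) k := by
  rcases ht.eq_or_lt with rfl | ht
  · refine ⟨0, fun k hk => ?_, fun k hk => ?_⟩
    · obtain rfl := Nat.le_zero.1 hk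
      simpa [poissonWeight] using hx
    · simpa [poissonWeight, zero_pow hk.ne'] using poissonWeight_nonneg hx k
  rcases hx.eq_or_lt with rfl | hx
  · exact ⟨0, fun k _ => by rw [add_zero], fun k _ => by rw [add_zero]⟩
  set L := log ((t + x) / t)
  have hL : 0 < L := log_pos (by rw [lt_div_iff₀ ht]; linarith)
  refine ⟨⌊x / L⌋₊, fun k hk => ?_, fun k hk => ?_⟩
  · rw [poissonWeight_add ht hx.le]
    refine mul_le_of_le_one_left (poissonWeight_nonneg ht.le k) (exp_le_one_iff.2 ?_)
    have := (Nat.cast_le.2 hk).trans (Nat.floor_le (by positivity))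
    rw [le_div_iff₀ hL] at this
    linarith
  · rw [poissonWeight_add ht hx.le]
    refine le_mul_of_one_le_left (poissonWeight_nonneg ht.le k) (one_le_exp ?_)
    have := (Nat.lt_floor_add_one (x / L)).trans_le
      (by exact_mod_cast hk : (⌊x / L⌋₊ : ℝ) + 1 ≤ k)
    rw [div_lt_iff₀ hL] at this
    linarith

lemma tsum_indicator_le_sum_range {g : ℕ → ℝ} (hg : Summable g) {m : ℕ}
    (hpos : ∀ k ≤ m, 0 ≤ g k) (hneg : ∀ k, m < k → g k ≤ 0) (A : Set ℕ) :
    ∑' k, A.indicator g k ≤ ∑ k ∈ range (m + 1), g k := by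
  calc ∑' k, A.indicator g k ≤ ∑' k, (↑(range (m + 1)) : Set ℕ).indicator g k := by
        refine (hg.indicator A).tsum_le_tsum (fun k => ?_) (hg.indicator _)
        by_cases hk : k ≤ m
        · rw [Set.indicator_of_mem (show k ∈ (↑(range (m + 1)) : Set ℕ) by simp; omega)]
          by_cases hA : k ∈ A <;> simp [hA, hpos k hk]
        · rw [Set.indicator_of_notMem (show k ∉ (↑(range (m + 1)) : Set ℕ) by simp; omega)]
          by_cases hA : k ∈ A <;> simp [hA, hneg k (by omega)]
    _ = ∑ k ∈ range (m + 1), g k := by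
        rw [← _root_.tsum_subtype]
        exact Finset.tsum_subtype _ g

lemma hasDerivAt_poissonWeight_zero (l : ℝ) :
    HasDerivAt (fun y => poissonWeight y 0) (-poissonWeight l 0) l := by
  simpa [poissonWeight] using (hasDerivAt_neg l).exp

lemma hasDerivAt_poissonWeight_succ (l : ℝ) (k : ℕ) :
    HasDerivAt (fun y => poissonWeight y (k + 1))
      (poissonWeight l k - poissonWeight l (k + 1)) l := by
  refine ((((hasDerivAt_neg l).exp).mul (hasDerivAt_pow (k + 1) l)).div_const
    ((k + 1).factorial : ℝ)).congr_deriv ?_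
  simp only [poissonWeight, Nat.factorial_succ, Nat.cast_mul, Nat.add_sub_cancel]
  field_simp
  ring

lemma hasDerivAt_sum_range_poissonWeight (m : ℕ) (l : ℝ) :
    HasDerivAt (fun y => ∑ k ∈ range (m + 1), poissonWeight y k) (-poissonWeight l m) l := by
  induction m with
  | zero => simpa using hasDerivAt_poissonWeight_zero l
  | succ m ih =>
    simp_rw [sum_range_succ _ (m + 1)]
    exact (ih.add (hasDerivAt_poissonWeight_succ l m)).congr_deriv (by ring)

lemma sum_range_poissonWeight_sub_eq_integral (m : ℕ) (a b : ℝ) :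
    ∑ k ∈ range (m + 1), poissonWeight a k - ∑ k ∈ range (m + 1), poissonWeight b k =
      ∫ l in a..b, poissonWeight l m := by
  have := intervalIntegral.integral_eq_sub_of_hasDerivAt
    (fun l _ => hasDerivAt_sum_range_poissonWeight m l)
    ((continuous_poissonWeight m).neg.intervalIntegrable a b)
  rw [intervalIntegral.integral_neg] at this
  linarith

lemma log_le_sub_inv_div_two {y : ℝ} (hy : 1 ≤ y) : log y ≤ (y - y⁻¹) / 2 := by
  have h0 : 0 < y := by linarith
  have := self_le_sinh_iff.2 (log_nonneg hy)
  rwa [sinh_eq, exp_log h0, exp_neg, exp_log h0] at this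

lemma mul_log_add_half_sub_mul_log_sub_half_le {s : ℝ} (hs : 1 / 2 < s) :
    (2 * s + 1) * log (s + 1 / 2) - (2 * s - 1) * log (s - 1 / 2) ≤ 2 * log s + 2 := by
  have hs0 : 0 < s := by linarith
  have hs1 : 0 < s - 1 / 2 := by linarith
  have hp := log_le_sub_inv_div_two (y := (s + 1 / 2) / s) (by rw [le_div_iff₀ hs0]; linarith)
  have hq := log_le_sub_inv_div_two (y := s / (s - 1 / 2)) (by rw [le_div_iff₀ hs1]; linarith)
  rw [log_div (by positivity) hs0.ne'] at hp
  rw [log_div hs0.ne' hs1.ne'] at hq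
  have hp' : (2 * s + 1) * (((s + 1 / 2) / s - ((s + 1 / 2) / s)⁻¹) / 2) = 1 + 1 / (4 * s) := by
    field_simp; ring
  have hq' : (2 * s - 1) * ((s / (s - 1 / 2) - (s / (s - 1 / 2))⁻¹) / 2) = 1 - 1 / (4 * s) := by
    have : 2 * s - 1 ≠ 0 := by linarith
    rw [inv_div]
    field_simp
    ring
  nlinarith

lemma log_two_add_mul_log_le_log_factorial (m : ℕ) :
    log 2 + (2 * m + 1) * log (m + 1 / 2) ≤ 2 * log m.factorial + 2 * m := by
  induction m with
  | zero => simp [one_div, log_inv]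
  | succ m ih =>
    have step := mul_log_add_half_sub_mul_log_sub_half_le (s := m + 1)
      (by linarith [m.cast_nonneg (α := ℝ)])
    rw [Nat.factorial_succ, Nat.cast_mul, log_mul (by positivity) (by positivity)]
    rw [show (m : ℝ) + 1 - 1 / 2 = m + 1 / 2 by ring] at step
    push_cast
    linarith

lemma poissonWeight_le {l : ℝ} (hl : 0 < l) (m : ℕ) :
    poissonWeight l m ≤ 1 / √(2 * exp 1 * l) := by
  set c : ℝ := m + 1 / 2
  have hc : 0 < c := by positivity
  have hfact := log_two_add_mul_log_le_log_factorial m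
  -- `log y ≤ y - 1` at `y = l / c` says that `l ^ c * exp (-l)` is largest at `l = c`.
  have hlog := mul_le_mul_of_nonneg_left (log_le_sub_one_of_pos (div_pos hl hc))
    (by positivity : (0 : ℝ) ≤ 2 * m + 1)
  rw [log_div hl.ne' hc.ne'] at hlog
  have hlin : (2 * m + 1) * (l / c - 1) = 2 * l - 2 * m - 1 := by field_simp; ring
  unfold poissonWeight
  rw [← log_le_log_iff (by positivity) (by positivity), one_div, log_inv, log_sqrt (by positivity),
    log_mul (by positivity) hl.ne', log_mul (by norm_num) (exp_pos 1).ne', log_exp,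
    log_div (by positivity) (by positivity), log_mul (exp_pos _).ne' (by positivity), log_exp,
    log_pow]
  linarith

lemma integral_poissonWeight_le (m : ℕ) {a b : ℝ} (ha : 0 ≤ a) (hab : a ≤ b) :
    ∫ l in a..b, poissonWeight l m ≤ √(2 / exp 1) * (√b - √a) := by
  rw [mul_sub]
  refine intervalIntegral.integral_le_sub_of_hasDeriv_right_of_le (g := fun l => √(2 / exp 1) * √l)
    (g' := fun l => √(2 / exp 1) * (1 / (2 * √l))) hab (by fun_prop) (fun l hl => ?_)
    (continuous_poissonWeight m).integrableOn_Icc (fun l hl => ?_)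
  · exact ((hasDerivAt_sqrt (ha.trans_lt hl.1).ne').const_mul _).hasDerivWithinAt
  · have hl : 0 < l := ha.trans_lt hl.1
    refine (poissonWeight_le hl m).trans_eq ?_
    have h2 : √2 * √2 = 2 := mul_self_sqrt zero_le_two
    rw [sqrt_mul (by positivity), sqrt_mul (by norm_num), sqrt_div zero_le_two]
    field_simp
    linarith

lemma poiProb_sub_poiProb_add_le_sqrt {t x : ℝ} (ht : 0 ≤ t) (hx : 0 ≤ x) (A : Set ℕ) :
    poiProb t A - poiProb (t + x) A ≤ √(2 / exp 1) * (√(t + x) - √t) := by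
  obtain ⟨m, hle, hge⟩ := exists_poissonWeight_crossing ht hx
  have hsum (l : ℝ) := (hasSum_poissonWeight l).summable
  calc poiProb t A - poiProb (t + x) A
      = ∑' k, A.indicator (poissonWeight t - poissonWeight (t + x)) k := by
        rw [poiProb_eq_tsum, poiProb_eq_tsum, Set.indicator_sub',
          ← ((hsum t).indicator A).tsum_sub ((hsum _).indicator A)]
        rfl
    _ ≤ ∑ k ∈ range (m + 1), (poissonWeight t - poissonWeight (t + x)) k :=
        tsum_indicator_le_sum_range ((hsum t).sub (hsum _))
          (fun k hk => sub_nonneg.2 (hle k hk)) (fun k hk => sub_nonpos.2 (hge k hk)) A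
    _ = ∫ l in t..t + x, poissonWeight l m := by
        rw [← sum_range_poissonWeight_sub_eq_integral, ← sum_sub_distrib]
        rfl
    _ ≤ √(2 / exp 1) * (√(t + x) - √t) := integral_poissonWeight_le m ht (by linarith)

/-- The total variation distance between two Poisson distributions satisfies
`d_TV(Poi(t), Poi(t+x)) ≤ min(1 - e^{-x}, √(2/e)(√(t+x) - √t))` for `t, x ≥ 0`. -/
theorem poisson_tv_bound (t x : ℝ) (ht : 0 ≤ t) (hx : 0 ≤ x) :
    (⨆ A : Set ℕ, |poiProb t A - poiProb (t + x) A|)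
      ≤ min (1 - Real.exp (-x)) (Real.sqrt (2 / Real.exp 1) * (Real.sqrt (t + x) - Real.sqrt t)) := by
  have one_sided (A : Set ℕ) : poiProb t A - poiProb (t + x) A ≤
      min (1 - exp (-x)) (√(2 / exp 1) * (√(t + x) - √t)) :=
    le_min (poiProb_sub_poiProb_add_le_one_sub_exp ht hx A)
      (poiProb_sub_poiProb_add_le_sqrt ht hx A)
  refine ciSup_le fun A => abs_sub_le_iff.2 ⟨one_sided A, ?_⟩
  linarith [one_sided Aᶜ, poiProb_add_poiProb_compl t A, poiProb_add_poiProb_compl (t + x) A]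
end

section
/- Fix c ∈ (0,1) and H > 0 with n ≥ e^H. Set δ = cH/ln n and let S' satisfy δ ln S' - δ ln δ - (1-δ) ln(1-δ) = H. Then S' ≥ (cH/ln n)·n^{1/c}·(1-c)^{1/c}, and hence δ/S' ≤ ((1-c)n)^{-1/c}. -/
open Real

/-- Fix `c ∈ (0,1)`, `H > 0`, `n ≥ e^H`.  Set `δ = cH/ln n` and let `S'` satisfy
`δ ln S' - δ ln δ - (1-δ) ln(1-δ) = H`.  Then `S' ≥ (cH/ln n)·n^{1/c}·(1-c)^{1/c}`,
and hence `δ/S' ≤ ((1-c)n)^{-1/c}`. -/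
theorem support_size_lower_bound (c H : ℝ) (n : ℕ) (S' : ℝ)
    (hc0 : 0 < c) (hc1 : c < 1) (hH : 0 < H)
    (hn : Real.exp H ≤ (n : ℝ)) (hS' : 0 < S')
    (hent : (c * H / Real.log n) * Real.log S'
        - (c * H / Real.log n) * Real.log (c * H / Real.log n)
        - (1 - c * H / Real.log n) * Real.log (1 - c * H / Real.log n) = H) :
    (c * H / Real.log n) * (n : ℝ) ^ (1 / c) * (1 - c) ^ (1 / c) ≤ S' ∧
      (c * H / Real.log n) / S' ≤ ((1 - c) * n) ^ (-(1 / c)) := by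
  have hnpos : (0 : ℝ) < n := lt_of_lt_of_le (Real.exp_pos H) hn
  have hL : H ≤ Real.log n := by
    have := Real.log_le_log (Real.exp_pos H) hn
    rwa [Real.log_exp] at this
  have hLpos : 0 < Real.log n := lt_of_lt_of_le hH hL
  set δ := c * H / Real.log n with hδdef
  have hδpos : 0 < δ := by positivity
  have hδc : δ ≤ c := by
    rw [hδdef, div_le_iff₀ hLpos]
    nlinarith
  have hδ1 : δ < 1 := lt_of_le_of_lt hδc hc1
  have h1δ : 0 < 1 - δ := by linarith
  have h1c : 0 < 1 - c := by linarith
  have htc : δ / c = H / Real.log n := by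
    rw [hδdef]; field_simp
  have ht0 : 0 ≤ δ / c := le_of_lt (by positivity)
  have ht1 : δ / c ≤ 1 := by
    rw [htc, div_le_one hLpos]; exact hL
  -- Bernoulli: (1-c)^(δ/c) ≤ 1 - δ
  have hbern : (1 - c) ^ (δ / c) ≤ 1 - δ := by
    have hb := rpow_one_add_le_one_add_mul_self (s := -c) (by linarith) ht0 ht1
    have hδe : δ / c * c = δ := div_mul_cancel₀ δ (ne_of_gt hc0)
    rw [show (1 : ℝ) + -c = 1 - c by ring] at hb
    calc (1 - c) ^ (δ / c) ≤ 1 + δ / c * (-c) := hb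
      _ = 1 - δ := by rw [mul_neg, hδe]; ring
  have hkey : (δ / c) * Real.log (1 - c) ≤ Real.log (1 - δ) := by
    have := Real.log_le_log (Real.rpow_pos_of_pos h1c _) hbern
    rwa [Real.log_rpow h1c] at this
  have hkey2 : (δ / c) * Real.log (1 - c) ≤ (1 - δ) * Real.log (1 - δ) := by
    have hlog1δ : Real.log (1 - δ) ≤ 0 := Real.log_nonpos (le_of_lt h1δ) (by linarith)
    nlinarith
  have hentv : δ * Real.log S' = H + δ * Real.log δ + (1 - δ) * Real.log (1 - δ) := by
    rw [hδdef]; linarith [hent]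
  have hlb : δ * (Real.log δ + (1 / c) * Real.log n + (1 / c) * Real.log (1 - c))
      ≤ δ * Real.log S' := by
    rw [hentv]
    have h1 : δ * ((1 / c) * Real.log n) = H := by
      rw [hδdef]; field_simp
    have h2 : δ * ((1 / c) * Real.log (1 - c)) = (δ / c) * Real.log (1 - c) := by ring
    nlinarith [hkey2]
  have hlog : Real.log δ + (1 / c) * Real.log n + (1 / c) * Real.log (1 - c)
      ≤ Real.log S' := le_of_mul_le_mul_left (by linarith [hlb]) hδpos
  have hBpos : (0 : ℝ) < δ * (n : ℝ) ^ (1 / c) * (1 - c) ^ (1 / c) := by positivity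
  have hfirst : δ * (n : ℝ) ^ (1 / c) * (1 - c) ^ (1 / c) ≤ S' := by
    have hlogB : Real.log (δ * (n : ℝ) ^ (1 / c) * (1 - c) ^ (1 / c))
        = Real.log δ + (1 / c) * Real.log n + (1 / c) * Real.log (1 - c) := by
      rw [Real.log_mul (by positivity) (by positivity),
        Real.log_mul (ne_of_gt hδpos) (by positivity),
        Real.log_rpow hnpos, Real.log_rpow h1c]
    have := Real.exp_le_exp.mpr (hlogB ▸ hlog)
    rwa [Real.exp_log hBpos, Real.exp_log hS'] at this
  refine ⟨hfirst, ?_⟩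
  have hmul : ((1 - c) * (n : ℝ)) ^ (1 / c) = (1 - c) ^ (1 / c) * (n : ℝ) ^ (1 / c) :=
    Real.mul_rpow (le_of_lt h1c) (le_of_lt hnpos)
  have hrpos : (0 : ℝ) < ((1 - c) * (n : ℝ)) ^ (1 / c) :=
    Real.rpow_pos_of_pos (by positivity) _
  have h2 : δ * ((1 - c) * (n : ℝ)) ^ (1 / c) ≤ S' := by
    calc δ * ((1 - c) * (n : ℝ)) ^ (1 / c)
        = δ * (n : ℝ) ^ (1 / c) * (1 - c) ^ (1 / c) := by rw [hmul]; ring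
      _ ≤ S' := hfirst
  rw [Real.rpow_neg (le_of_lt (by positivity : (0 : ℝ) < (1 - c) * n)), div_le_iff₀ hS',
    inv_mul_eq_div, le_div_iff₀ hrpos]
  exact h2
end

section
/- Under the uniform prior μ on distributions P with p_S = 1-δ and exactly S' of the first kS' coordinates equal to δ/S' (rest zero), the Bayes estimator (unconstrained, under ℓ1 loss), given observation X, sets coordinates for observed symbols to δ/S', unobserved symbols among the first kS' to 0, and the last coordinate to 1-δ, provided (S'-N(X))/(kS'-N(X)) ≤ 1/2; its posterior ℓ1 risk equals (1 - N(X)/S')·δ, where N(X) is the number of distinct observed symbols among the first kS' coordinates. -/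
open Finset

/-- The posterior `ℓ₁` risk, given an observation with `N` distinct observed symbols
among the first `kS'` coordinates, of a candidate estimate `a` under the uniform prior
on distributions with `p_S = 1-δ` and exactly `S'` of the first `kS'` coordinates equal
to `δ/S'`. -/
noncomputable def postRisk (k S' N : ℕ) (δ : ℝ) (a : ℕ → ℝ) : ℝ :=
  (∑ i ∈ Finset.range N, |δ / S' - a i|) +
    (∑ j ∈ Finset.Ico N (k * S'),
      (((k : ℝ) - 1) * S' / ((k * S' : ℕ) - (N : ℝ)) * |a j| +
        ((S' : ℝ) - N) / ((k * S' : ℕ) - (N : ℝ)) * |δ / S' - a j|)) +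
    |1 - δ - a (k * S')|

/-- Under the uniform prior described above, provided `(S'-N)/(kS'-N) ≤ 1/2`, the
unconstrained Bayes estimate sets observed coordinates to `δ/S'`, unobserved coordinates
among the first `kS'` to `0`, and the last coordinate to `1-δ`; it minimizes the
posterior `ℓ₁` risk, and its posterior risk equals `(1 - N/S')·δ`. -/
theorem bayes_estimator_unconstrained (k S' N : ℕ) (δ : ℝ)
    (hk : 2 ≤ k) (hS' : 1 ≤ S') (hN : N ≤ S') (hδ0 : 0 ≤ δ) (hδ1 : δ ≤ 1)
    (hhalf : ((S' : ℝ) - N) / ((k * S' : ℕ) - (N : ℝ)) ≤ 1 / 2) :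
    (∀ a : ℕ → ℝ, (1 - (N : ℝ) / S') * δ ≤ postRisk k S' N δ a) ∧
      postRisk k S' N δ
          (fun i => if i < N then δ / S' else if i < k * S' then 0 else 1 - δ)
        = (1 - (N : ℝ) / S') * δ := by
  have hkS' : 2 * S' ≤ k * S' := Nat.mul_le_mul_right _ hk
  have hNlt : N < k * S' := by omega
  have hS'R : (0:ℝ) < (S':ℝ) := by exact_mod_cast hS'
  have hNR : (N:ℝ) ≤ S' := by exact_mod_cast hN
  have hkR : (2:ℝ) ≤ (k:ℝ) := by exact_mod_cast hk
  have hNR0 : (0:ℝ) ≤ N := Nat.cast_nonneg N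
  have hD : (0:ℝ) < ((k*S' : ℕ):ℝ) - N := by
    have : (N:ℝ) < ((k*S':ℕ):ℝ) := by exact_mod_cast hNlt
    linarith
  set c : ℝ := δ / S' with hc
  have hc0 : 0 ≤ c := div_nonneg hδ0 hS'R.le
  set D : ℝ := ((k*S' : ℕ):ℝ) - N with hDdef
  set B : ℝ := ((S':ℝ) - N) / D with hBdef
  set A : ℝ := ((k:ℝ) - 1) * S' / D with hAdef
  have hB0 : 0 ≤ B := div_nonneg (by linarith) hD.le
  have hAB : B ≤ A := by
    rw [hBdef, hAdef]
    apply div_le_div_of_nonneg_right _ hD.le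
    nlinarith
  have hcardsum : ((Finset.Ico N (k*S')).card : ℝ) * (B * c) = (1 - (N:ℝ)/S') * δ := by
    rw [Nat.card_Ico]
    have hcast : ((k*S' - N : ℕ):ℝ) = D := by
      rw [hDdef]; push_cast [Nat.cast_sub hNlt.le]; ring
    rw [hcast, hBdef, hc]
    field_simp
  constructor
  · intro a
    have hterm : ∀ j ∈ Finset.Ico N (k*S'), B * c ≤ A * |a j| + B * |c - a j| := by
      intro j _
      have h1 : c ≤ |a j| + |c - a j| := by
        calc c = |c| := (abs_of_nonneg hc0).symm
        _ = |(c - a j) + a j| := by ring_nf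
        _ ≤ |c - a j| + |a j| := abs_add_le _ _
        _ = |a j| + |c - a j| := by ring
      have h2 : B * |a j| ≤ A * |a j| := mul_le_mul_of_nonneg_right hAB (abs_nonneg _)
      nlinarith [mul_le_mul_of_nonneg_left h1 hB0]
    have hsum : ((Finset.Ico N (k*S')).card : ℝ) * (B * c) ≤
        ∑ j ∈ Finset.Ico N (k*S'), (A * |a j| + B * |c - a j|) := by
      calc ((Finset.Ico N (k*S')).card : ℝ) * (B * c)
          = ∑ _j ∈ Finset.Ico N (k*S'), B * c := by rw [Finset.sum_const, nsmul_eq_mul]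
        _ ≤ _ := Finset.sum_le_sum hterm
    have h1 : (0:ℝ) ≤ ∑ i ∈ Finset.range N, |c - a i| :=
      Finset.sum_nonneg fun i _ => abs_nonneg _
    have h2 : (0:ℝ) ≤ |1 - δ - a (k*S')| := abs_nonneg _
    rw [← hcardsum]
    unfold postRisk
    rw [← hc, ← hDdef, ← hBdef, ← hAdef]
    linarith
  · unfold postRisk
    rw [← hc, ← hDdef, ← hBdef, ← hAdef]
    have e1 : (∑ i ∈ Finset.range N, |c - (if i < N then c else if i < k*S' then 0 else 1 - δ)|) = 0 := by
      apply Finset.sum_eq_zero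
      intro i hi
      rw [Finset.mem_range] at hi
      simp [hi]
    have e2 : (∑ j ∈ Finset.Ico N (k*S'),
        (A * |(if j < N then c else if j < k*S' then 0 else 1 - δ)| +
          B * |c - (if j < N then c else if j < k*S' then 0 else 1 - δ)|)) =
        ((Finset.Ico N (k*S')).card : ℝ) * (B * c) := by
      rw [Finset.sum_congr rfl (fun j hj => ?_), Finset.sum_const, nsmul_eq_mul]
      rw [Finset.mem_Ico] at hj
      have h1 : ¬ j < N := not_lt.mpr hj.1
      simp [h1, hj.2, abs_of_nonneg hc0]
    have e3 : ¬ (k * S' < N) := not_lt.mpr hNlt.le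
    have e4 : ¬ (k * S' < k * S') := lt_irrefl _
    simp only [e3, e4, if_false]
    rw [e1, e2, hcardsum]
    simp
end
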